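/- arXiv:2307.15685 — 5 statements merged into one kernel-verified Lean document; each statement's English description precedes it below -/
import Mathlib

section
/- The function f(x) = x(e^x - 1)/(e^x - 1 - x) is strictly increasing on (0, ∞). -/
/-- Key inequality: `x² eˣ < (eˣ - 1)²` for `x > 0`. -/
lemma key_ineq {x : ℝ} (hx : 0 < x) : x ^ 2 * Real.exp x < (Real.exp x - 1) ^ 2 := by
  set t := Real.exp (x / 2) with ht_def
  have ht : 0 < t := Real.exp_pos _
  have ht2 : t ^ 2 = Real.exp x := by
    rw [ht_def, ← Real.exp_nat_mul]
    norm_num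
    ring
  set u := 1 + x / 2 + (x / 2) ^ 2 / 2 with hu_def
  have hu : u ≤ t := Real.quadratic_le_exp_of_nonneg (by linarith)
  have hupos : 0 < u := by positivity
  have h1 : u ^ 2 - x * u - 1 > 0 := by
    rw [hu_def]; nlinarith [pow_pos hx 4]
  have h2 : t ^ 2 - x * t - 1 > 0 := by
    nlinarith [mul_nonneg (sub_nonneg.2 hu) (show (0:ℝ) ≤ t + u - x by nlinarith)]
  have h3 : t ^ 2 - 1 + x * t > 0 := by nlinarith
  nlinarith [mul_pos h2 h3]

/-- `g x = 1/x - 1/(eˣ-1)` is strictly antitone on `(0, ∞)`. -/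
lemma g_strictAnti :
    StrictAntiOn (fun x : ℝ => x⁻¹ - (Real.exp x - 1)⁻¹) (Set.Ioi (0 : ℝ)) := by
  have hderiv : ∀ x ∈ Set.Ioi (0:ℝ), HasDerivAt (fun x : ℝ => x⁻¹ - (Real.exp x - 1)⁻¹)
      (-(x ^ 2)⁻¹ - -Real.exp x / (Real.exp x - 1) ^ 2) x := by
    intro x hx
    have hx0 : (0:ℝ) < x := hx
    have hex : x + 1 < Real.exp x := Real.add_one_lt_exp hx0.ne'
    have hne : Real.exp x - 1 ≠ 0 := by linarith
    exact (hasDerivAt_inv hx0.ne').sub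
      (((Real.hasDerivAt_exp x).sub_const 1).inv hne)
  apply strictAntiOn_of_deriv_neg (convex_Ioi 0)
  · exact fun x hx => (hderiv x hx).continuousAt.continuousWithinAt
  · intro x hx
    rw [interior_Ioi] at hx
    rw [(hderiv x hx).deriv]
    have hx0 : (0:ℝ) < x := hx
    have hex : x + 1 < Real.exp x := Real.add_one_lt_exp hx0.ne'
    have hd : (0:ℝ) < (Real.exp x - 1) ^ 2 := pow_pos (by linarith) 2
    have h1 : Real.exp x / (Real.exp x - 1) ^ 2 < (x ^ 2)⁻¹ := by
      rw [div_lt_iff₀ hd, inv_mul_eq_div, lt_div_iff₀ (pow_pos hx0 2)]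
      nlinarith [key_ineq hx0]
    rw [neg_div]
    linarith

theorem f_strictMonoOn :
    StrictMonoOn (fun x : ℝ => x * (Real.exp x - 1) / (Real.exp x - 1 - x))
      (Set.Ioi (0 : ℝ)) := by
  have hg : ∀ x ∈ Set.Ioi (0:ℝ), (0:ℝ) < x⁻¹ - (Real.exp x - 1)⁻¹ := by
    intro x hx
    have hx0 : (0:ℝ) < x := hx
    have hex : x + 1 < Real.exp x := Real.add_one_lt_exp hx0.ne'
    have h1 : (0:ℝ) < Real.exp x - 1 := by linarith
    have : (Real.exp x - 1)⁻¹ < x⁻¹ := by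
      apply inv_strictAnti₀ hx0
      linarith
    linarith
  have hf : ∀ x ∈ Set.Ioi (0:ℝ),
      x * (Real.exp x - 1) / (Real.exp x - 1 - x) = (x⁻¹ - (Real.exp x - 1)⁻¹)⁻¹ := by
    intro x hx
    have hx0 : (0:ℝ) < x := hx
    have hex : x + 1 < Real.exp x := Real.add_one_lt_exp hx0.ne'
    have h1 : Real.exp x - 1 ≠ 0 := by linarith
    have h2 : Real.exp x - 1 - x ≠ 0 := by
      have hD : 0 < Real.exp x - 1 - x := by
        have := Real.quadratic_le_exp_of_nonneg hx0.le
        nlinarith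
      linarith
    field_simp
  intro a ha b hb hab
  simp only
  rw [hf a ha, hf b hb]
  exact inv_strictAnti₀ (hg b hb) (g_strictAnti ha hb hab)
end

section
/- For every d > 1, with ρ = ρ_{2,d} = sup{x ∈ [0,1] : x = 1 - exp(-d x)}, one has ρ - dρ + (1/2) d ρ^2 < 0. -/
/-! The largest fixed point `ρ` is positive (by the intermediate value theorem, since
`1 - exp (-d x) - x` is nonnegative at `x = 1 - 1/d` and negative at `x = 1`), so `t = dρ > 0` and
`exp t = 1 / (1 - ρ)`. The Padé bound `exp t < (2 + t) / (2 - t)` then reads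
`2 - dρ < (2 + dρ)(1 - ρ)`, which rearranges to the claim. -/

open Real Set

lemma two_sub_mul_exp_lt_two_add {t : ℝ} (ht : 0 < t) : (2 - t) * exp t < 2 + t := by
  rcases lt_or_ge t 2 with ht2 | ht2
  · have h := exp_lt_two_add_div_two_sub ht ht2
    rw [lt_div_iff₀ (by linarith)] at h
    linarith
  · nlinarith [exp_pos t]

lemma sub_mul_add_half_mul_sq_neg_of_eq_one_sub_exp {d x : ℝ} (hx : 0 < x)
    (hfix : x = 1 - exp (-(d * x))) : x - d * x + 1 / 2 * d * x ^ 2 < 0 := by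
  have hexp : exp (-(d * x)) = 1 - x := by linarith
  have hdx : 0 < d * x := by
    by_contra! h
    linarith [one_le_exp (neg_nonneg.2 h)]
  have key : 2 - d * x < (2 + d * x) * (1 - x) := by
    have h := mul_lt_mul_of_pos_right (two_sub_mul_exp_lt_two_add hdx) (exp_pos (-(d * x)))
    rwa [mul_assoc, ← exp_add, add_neg_cancel, exp_zero, mul_one, hexp] at h
  nlinarith

def unitFixedPoints (d : ℝ) : Set ℝ :=
  {x : ℝ | x ∈ Icc (0 : ℝ) 1 ∧ x = 1 - exp (-(d * x))}

lemma isCompact_unitFixedPoints (d : ℝ) : IsCompact (unitFixedPoints d) :=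
  isCompact_Icc.inter_right (isClosed_eq continuous_id (by fun_prop))

lemma zero_mem_unitFixedPoints (d : ℝ) : 0 ∈ unitFixedPoints d :=
  ⟨left_mem_Icc.2 zero_le_one, by simp⟩

lemma exists_pos_mem_unitFixedPoints {d : ℝ} (hd : 1 < d) :
    ∃ x ∈ unitFixedPoints d, 0 < x := by
  set g : ℝ → ℝ := fun x ↦ 1 - exp (-(d * x)) - x
  have hd0 : 0 < d := by linarith
  have hx₀ : 0 < 1 - 1 / d := by rw [sub_pos, div_lt_one hd0]; exact hd
  have hg₁ : g 1 ≤ 0 := by simp [g, (exp_pos _).le]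
  have hg₀ : 0 ≤ g (1 - 1 / d) := by
    have hmul : d * (1 - 1 / d) = d - 1 := by field_simp
    have hexp : exp (-(d - 1)) ≤ 1 / d := by
      rw [exp_neg, ← one_div]
      exact one_div_le_one_div_of_le hd0 (by linarith [add_one_le_exp (d - 1)])
    simp only [g, hmul]
    linarith
  obtain ⟨x, hx, hgx⟩ := intermediate_value_Icc' (sub_le_self 1 (by positivity))
    (by fun_prop : Continuous g).continuousOn ⟨hg₁, hg₀⟩
  exact ⟨x, ⟨⟨hx₀.le.trans hx.1, hx.2⟩, by simp only [g] at hgx; linarith⟩, hx₀.trans_le hx.1⟩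

theorem rho_two_ineq (d : ℝ) (hd : 1 < d) (ρ : ℝ)
    (hρ : ρ = sSup {x : ℝ | x ∈ Set.Icc (0 : ℝ) 1 ∧ x = 1 - Real.exp (-(d * x))}) :
    ρ - d * ρ + (1 / 2) * d * ρ ^ 2 < 0 := by
  change ρ = sSup (unitFixedPoints d) at hρ
  have hcompact := isCompact_unitFixedPoints d
  obtain ⟨x, hxS, hx⟩ := exists_pos_mem_unitFixedPoints hd
  have hρS : ρ ∈ unitFixedPoints d := hρ ▸ hcompact.sSup_mem ⟨0, zero_mem_unitFixedPoints d⟩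
  have hρpos : 0 < ρ := hx.trans_le (hρ ▸ le_csSup hcompact.bddAbove hxS)
  exact sub_mul_add_half_mul_sq_neg_of_eq_one_sub_exp hρpos hρS.2
end

section
/- Let t ≥ 3 and let q be a prime power. If A is a matrix over F_q with at least (qt)^{2^t} rows such that every standard basis vector and every vector of support size exactly three is a column of A, then the matroid M[A] has a PG(t-1, q)-minor. -/
open Set Matroid

/-- The contraction `M / C`, defined via duality and restriction. -/
noncomputable def Matroid.contractSet {α : Type*} (M : Matroid α) (C : Set α) : Matroid α :=
  (M✶ ↾ (M.E \ C))✶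

/-- `N` is a minor of `M`: it is obtained from `M` by contracting a set `C` and
deleting a set `D`. -/
def Matroid.IsMinorOf {α : Type*} (N M : Matroid α) : Prop :=
  ∃ C D : Set α, N = (M.contractSet C) ↾ ((M.contractSet C).E \ D)

/-- `M` is represented by the matrix whose column indexed by `e : α` is `A e`. -/
def Matroid.RepBy {α F : Type*} [Field F] {n : ℕ} (M : Matroid α) (A : α → Fin n → F) : Prop :=
  ∀ I : Set α, M.Indep I ↔ I ⊆ M.E ∧ LinearIndependent F (fun e : I => A e.1)

/-!
Give every point `p = [u]` of `PG(t-1, q)` private coordinates `h₀, …, hₜ, k₀, …, kₜ₋₁` and the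
"gadget" columns `e_{hⱼ} - mⱼ - e_{hⱼ₊₁}`, `e_{hₜ}`, `e_{kⱼ}`, where `mⱼ = uⱼ eⱼ` if `uⱼ ≠ 0` and
`mⱼ = e_{kⱼ}` otherwise; every gadget is a unit vector or has support three. The links
telescope, so the support-three column `e_{h₀} + e_{hₜ} + e_{k₀}` is congruent to `u` (placed on
the first `t` coordinates) modulo the span of the gadgets. Solving for `e_{hⱼ}` from `j = t`
downwards shows that the gadgets together with `e₀, …, eₜ₋₁` span, hence form a basis, so the
first `t` coordinates survive injectively in the quotient by the gadget span. Contracting the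
gadgets thus turns these `|PG(t-1, q)|` columns into a copy of `PG(t-1, q)`.
-/

theorem Fin.sum_castSucc_sub_succ {M : Type*} [AddCommGroup M] :
    ∀ {t : ℕ} (f : Fin (t + 1) → M), ∑ i : Fin t, (f i.castSucc - f i.succ) = f 0 - f (Fin.last t)
  | 0, f => by simp
  | t + 1, f => by
    have := Fin.sum_castSucc_sub_succ (f ∘ Fin.castSucc)
    rw [Fin.sum_univ_castSucc]
    simp only [Function.comp_apply, ← Fin.succ_castSucc] at this
    rw [this]
    simp

theorem ncard_support_single_add_single_add_single {X F : Type*} [DecidableEq X]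
    [AddMonoid F] {x y z : X} (hxy : x ≠ y) (hxz : x ≠ z) (hyz : y ≠ z) {a b c : F}
    (ha : a ≠ 0) (hb : b ≠ 0) (hc : c ≠ 0) :
    (Function.support (Pi.single x a + Pi.single y b + Pi.single z c : X → F)).ncard = 3 := by
  rw [Set.ncard_eq_three]
  refine ⟨x, y, z, hxy, hxz, hyz, ?_⟩
  ext i
  by_cases hix : i = x <;> by_cases hiy : i = y <;> by_cases hiz : i = z <;>
    simp_all

def IsSingleOrSupportThree {X F : Type*} [DecidableEq X] [Zero F] [One F] (v : X → F) : Prop :=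
  (∃ x, v = Pi.single x 1) ∨ (Function.support v).ncard = 3

section ExtendByZero

variable {R X Y : Type*} [Semiring R] {ι : X → Y}

theorem Function.ExtendByZero.linearMap_single [DecidableEq X] [DecidableEq Y]
    (hι : Function.Injective ι) (x : X) (r : R) :
    Function.ExtendByZero.linearMap R ι (Pi.single x r) = Pi.single (ι x) r := by
  ext y
  by_cases hy : ∃ x', ι x' = y
  · obtain ⟨x', rfl⟩ := hy
    simp [hι.extend_apply, Pi.single_apply, hι.eq_iff]
  · rw [Function.ExtendByZero.linearMap_apply, Function.extend_apply' _ _ _ hy,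
      Pi.single_eq_of_ne (fun h => hy ⟨x, h.symm⟩)]
    rfl

theorem Function.ExtendByZero.support_linearMap (hι : Function.Injective ι) (v : X → R) :
    Function.support (Function.ExtendByZero.linearMap R ι v) = ι '' Function.support v :=
  Function.support_extend_zero hι

theorem Function.ExtendByZero.injective_linearMap (hι : Function.Injective ι) :
    Function.Injective (Function.ExtendByZero.linearMap R ι) :=
  Function.extend_injective hι (0 : Y → R)

theorem IsSingleOrSupportThree.extendByZero [DecidableEq X] [DecidableEq Y]
    (hι : Function.Injective ι) {v : X → R}
    (hv : IsSingleOrSupportThree v) :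
    IsSingleOrSupportThree (Function.ExtendByZero.linearMap R ι v) := by
  rcases hv with ⟨x, rfl⟩ | hv
  · exact .inl ⟨ι x, Function.ExtendByZero.linearMap_single hι x 1⟩
  · rw [IsSingleOrSupportThree, Function.ExtendByZero.support_linearMap hι,
      Set.ncard_image_of_injective _ hι]
    exact .inr hv

end ExtendByZero

/-- `inl j` is the shared coordinate `eⱼ`; `inr (p, inl i)` and `inr (p, inr j)` are the private
coordinates `hᵢ` and `kⱼ` of the point `p`. Below, `step u p j` is `mⱼ`. -/
abbrev ChainCoord (t : ℕ) (P : Type*) := Fin t ⊕ P × (Fin (t + 1) ⊕ Fin t)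

namespace ChainCoord

open Sum Submodule

variable {F P : Type*} [Field F] [DecidableEq P] {t : ℕ}

noncomputable def apex [NeZero t] (p : P) : ChainCoord t P → F :=
  Pi.single (inr (p, inl 0)) 1 + Pi.single (inr (p, inl (Fin.last t))) 1 +
    Pi.single (inr (p, inr 0)) 1

theorem ncard_support_apex [NeZero t] (p : P) :
    (Function.support (apex (F := F) (t := t) p)).ncard = 3 :=
  ncard_support_single_add_single_add_single
    (by simpa [Fin.ext_iff] using (NeZero.ne t).symm) (by simp) (by simp)
    one_ne_zero one_ne_zero one_ne_zero

variable [DecidableEq F] (u : P → Fin t → F)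

noncomputable def step (p : P) (j : Fin t) : ChainCoord t P → F :=
  if u p j = 0 then Pi.single (inr (p, inr j)) 1 else Pi.single (inl j) (u p j)

noncomputable def link (p : P) (j : Fin t) : ChainCoord t P → F :=
  Pi.single (inr (p, inl j.castSucc)) 1 - step u p j - Pi.single (inr (p, inl j.succ)) 1

noncomputable def gadget : P × (Fin (t + 1) ⊕ Fin t) → ChainCoord t P → F
  | (p, inl i) => Fin.lastCases (Pi.single (inr (p, inl (Fin.last t))) 1) (link u p) i
  | (p, inr j) => Pi.single (inr (p, inr j)) 1

noncomputable def family : ChainCoord t P → ChainCoord t P → F :=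
  Sum.elim (fun j => Pi.single (inl j) 1) (gadget u)

@[simp] theorem gadget_last (p : P) :
    gadget u (p, inl (Fin.last t)) = Pi.single (inr (p, inl (Fin.last t))) 1 := by
  simp only [gadget, Fin.lastCases_last]

@[simp] theorem gadget_castSucc (p : P) (j : Fin t) :
    gadget u (p, inl j.castSucc) = link u p j := by
  simp only [gadget, Fin.lastCases_castSucc]

@[simp] theorem gadget_inr (p : P) (j : Fin t) :
    gadget u (p, inr j) = Pi.single (inr (p, inr j)) 1 :=
  rfl

@[simp] theorem family_inl (j : Fin t) : family u (inl j) = Pi.single (inl j) 1 :=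
  rfl

@[simp] theorem family_inr (x : P × (Fin (t + 1) ⊕ Fin t)) : family u (inr x) = gadget u x :=
  rfl

theorem isSingleOrSupportThree_gadget (x : P × (Fin (t + 1) ⊕ Fin t)) :
    IsSingleOrSupportThree (gadget u x) := by
  obtain ⟨p, i | j⟩ := x
  · induction i using Fin.lastCases with
    | last => exact .inl ⟨_, gadget_last u p⟩
    | cast j =>
      refine .inr ?_
      have hne : j.castSucc ≠ j.succ := (Fin.castSucc_lt_succ (i := j)).ne
      rw [gadget_castSucc, link, step, sub_eq_add_neg, sub_eq_add_neg, ← Pi.single_neg]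
      split_ifs with hj
      · rw [← Pi.single_neg]
        exact ncard_support_single_add_single_add_single (by simp) (by simp [hne])
          (by simp) one_ne_zero (neg_ne_zero.2 one_ne_zero) (neg_ne_zero.2 one_ne_zero)
      · rw [← Pi.single_neg]
        exact ncard_support_single_add_single_add_single (by simp) (by simp [hne])
          (by simp) one_ne_zero (neg_ne_zero.2 hj) (neg_ne_zero.2 one_ne_zero)
  · exact .inl ⟨_, rfl⟩

theorem step_sub_smul_mem_span (p : P) (j : Fin t) :
    step u p j - u p j • Pi.single (inl j) 1 ∈ span F (range (gadget u)) := by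
  rw [step]
  split_ifs with h
  · rw [h, zero_smul, sub_zero, ← gadget_inr]
    exact subset_span (mem_range_self _)
  · rw [← Pi.single_smul', smul_eq_mul, mul_one, sub_self]
    exact zero_mem _

theorem single_mem_span_family (c : ChainCoord t P) :
    Pi.single c 1 ∈ span F (range (family u)) := by
  have mem : ∀ x, family u x ∈ span F (range (family u)) := fun x => subset_span (mem_range_self x)
  obtain j | ⟨p, i | j⟩ := c
  · exact mem (inl j)
  · induction i using Fin.reverseInduction with
    | last => simpa only [family_inr, gadget_last] using mem (inr (p, inl (Fin.last t)))
    | cast j ih =>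
      have hstep : step u p j ∈ span F (range (family u)) := by
        have hsub : range (gadget u) ⊆ range (family u) := by
          rintro _ ⟨x, rfl⟩
          exact ⟨inr x, rfl⟩
        have h := span_mono hsub (step_sub_smul_mem_span u p j)
        simpa only [family_inl, sub_add_cancel] using add_mem h (smul_mem _ (u p j) (mem (inl j)))
      have hlink : link u p j ∈ span F (range (family u)) := by
        simpa only [family_inr, gadget_castSucc] using mem (inr (p, inl j.castSucc))
      have hsplit : Pi.single (inr (p, inl j.castSucc)) 1 =
          link u p j + step u p j + Pi.single (inr (p, inl j.succ)) (1 : F) := by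
        rw [link, add_assoc, sub_sub, sub_add_cancel]
      rw [hsplit]
      exact add_mem (add_mem hlink hstep) ih
  · exact mem (inr (p, inr j))

theorem linearIndependent_family [Fintype P] : LinearIndependent F (family u) :=
  linearIndependent_of_top_le_span_of_card_eq_finrank
    (by
      rw [← (Pi.basisFun F (ChainCoord t P)).span_eq, span_le]
      rintro _ ⟨c, rfl⟩
      rw [Pi.basisFun_apply]
      exact single_mem_span_family u c)
    (Module.finrank_fintype_fun_eq_card F).symm

theorem apex_sub_mem_span [NeZero t] (p : P) :
    apex p - ∑ j, u p j • Pi.single (inl j) 1 ∈ span F (range (gadget u)) := by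
  have mem : ∀ x, gadget u x ∈ span F (range (gadget u)) := fun x => subset_span (mem_range_self x)
  have hsum : ∑ j, link u p j = Pi.single (inr (p, inl 0)) 1 -
      Pi.single (inr (p, inl (Fin.last t))) 1 - ∑ j, step u p j := by
    simp only [link, sub_right_comm _ (step u p _), Finset.sum_sub_distrib,
      Fin.sum_castSucc_sub_succ (fun i => (Pi.single (inr (p, inl i)) 1 : ChainCoord t P → F))]
  have hsplit : apex p - ∑ j, u p j • Pi.single (inl j) 1 =
      ∑ j, link u p j + ∑ j, (step u p j - u p j • Pi.single (inl j) 1) +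
        2 • gadget u (p, inl (Fin.last t)) + gadget u (p, inr 0) := by
    rw [hsum, Finset.sum_sub_distrib, gadget_last, apex, gadget]
    abel
  rw [hsplit]
  refine add_mem (add_mem (add_mem (sum_mem fun j _ => ?_) (sum_mem fun j _ =>
    step_sub_smul_mem_span u p j)) (nsmul_mem (mem _) 2)) (mem _)
  simpa using mem (p, inl j.castSucc)

end ChainCoord

open Submodule in
theorem exists_gadgets {F P : Type*} [Field F] [Fintype P] {t n : ℕ} [NeZero t]
    (hn : t + Fintype.card P * (2 * t + 1) ≤ n) (u : P → Fin t → F) :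
    ∃ (Z : P × (Fin (t + 1) ⊕ Fin t) → Fin n → F) (b : Fin t → Fin n → F)
      (w : P → Fin n → F),
      LinearIndependent F (Sum.elim b Z) ∧ (∀ x, IsSingleOrSupportThree (Z x)) ∧
      (∀ p, (Function.support (w p)).ncard = 3) ∧
      ∀ p, w p - Fintype.linearCombination F b (u p) ∈ span F (Set.range Z) := by
  classical
  obtain ⟨ι⟩ : Nonempty (ChainCoord t P ↪ Fin n) :=
    Function.Embedding.nonempty_of_card_le (by simpa [two_mul, add_right_comm] using hn)
  set Φ := Function.ExtendByZero.linearMap F ι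
  refine ⟨Φ ∘ ChainCoord.gadget u, Φ ∘ fun j => Pi.single (Sum.inl j) 1,
    Φ ∘ ChainCoord.apex, ?_, fun x => ?_, fun p => ?_, fun p => ?_⟩
  · rw [← Sum.comp_elim]
    exact (ChainCoord.linearIndependent_family u).map' Φ
      (LinearMap.ker_eq_bot.2 (Function.ExtendByZero.injective_linearMap ι.injective))
  · exact (ChainCoord.isSingleOrSupportThree_gadget u x).extendByZero ι.injective
  · rw [Function.comp_apply, Function.ExtendByZero.support_linearMap ι.injective,
      Set.ncard_image_of_injective _ ι.injective, ChainCoord.ncard_support_apex]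
  · have h := apply_mem_span_image_of_mem_span Φ (ChainCoord.apex_sub_mem_span u p)
    rw [← Set.range_comp, map_sub, map_sum] at h
    simpa [Fintype.linearCombination_apply] using h

namespace Matroid

open Submodule Function

variable {α F : Type*} [Field F] {n : ℕ} {M : Matroid α} {A : α → Fin n → F}

theorem contractSet_eq_contract (M : Matroid α) (C : Set α) : M.contractSet C = M ／ C :=
  rfl

theorem RepBy.contract_indep_iff (hM : M.RepBy A) {C J : Set α} (hC : M.Indep C)
    (hJ : J ⊆ M.E) (hJC : Disjoint J C) :
    (M ／ C).Indep J ↔ LinearIndepOn F ((span F (A '' C)).mkQ ∘ A) J := by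
  have hCA : LinearIndepOn F A C := ((hM C).1 hC).2
  rw [hC.contract_indep_iff, hM, union_comm, hCA.quotient_iff_union hJC.symm]
  exact ⟨fun h => h.2.2, fun h => ⟨hJC, union_subset hC.subset_ground hJ, h⟩⟩

theorem RepBy.exists_isMinorOf {ι κ τ : Type*} [Fintype τ] (hM : M.RepBy A) (hE : M.E = univ)
    {c : ι → α} {b : τ → Fin n → F} (hbc : LinearIndependent F (Sum.elim b (A ∘ c)))
    {e : κ → α} {u : κ → τ → F} (hu : Injective u) (hu0 : ∀ k, u k ≠ 0)
    (he : ∀ k, A (e k) - Fintype.linearCombination F b (u k) ∈ span F (range (A ∘ c))) :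
    ∃ N : Matroid α, N.IsMinorOf M ∧ Injective e ∧ range e = N.E ∧
      ∀ S : Set κ, N.Indep (e '' S) ↔ LinearIndepOn F u S := by
  obtain ⟨hb, hc, hdisj⟩ := linearIndependent_sum.1 hbc
  simp only [Sum.elim_comp_inl, Sum.elim_comp_inr] at hb hc hdisj
  set Q := span F (range (A ∘ c))
  have hC : M.Indep (range c) :=
    (hM _).2 ⟨by simp [hE], (linearIndepOn_range_iff hc.injective.of_comp A).2 hc⟩
  set π := Fintype.linearCombination F (Q.mkQ ∘ b)
  have hπ : Injective π := linearIndependent_iff_injective_fintypeLinearCombination.1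
    (hb.map (by rwa [ker_mkQ]))
  have hπe : Q.mkQ ∘ A ∘ e = π ∘ u := by
    funext k
    have hπu : π (u k) = Q.mkQ (Fintype.linearCombination F b (u k)) := by
      simp [π, Fintype.linearCombination_apply]
    rw [comp_apply, comp_apply, comp_apply, hπu]
    exact (Submodule.Quotient.eq Q).2 (he k)
  have he_inj : Injective e := by
    refine Injective.of_comp (f := Q.mkQ ∘ A) ?_
    change Injective (Q.mkQ ∘ A ∘ e)
    rw [hπe]
    exact hπ.comp hu
  have hdisj_e : Disjoint (range e) (range c) := by
    rw [Set.disjoint_iff_forall_ne]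
    rintro _ ⟨k, rfl⟩ _ ⟨i, rfl⟩ h
    have h0 : π (u k) = 0 := by
      rw [← comp_apply (f := π), ← hπe, comp_apply, comp_apply, h, mkQ_apply,
        Quotient.mk_eq_zero]
      exact subset_span ⟨i, rfl⟩
    exact hu0 k (hπ (h0.trans (map_zero π).symm))
  have hground : range e ⊆ (M ／ range c).E := by
    rw [contract_ground, hE]
    exact subset_sdiff.2 ⟨subset_univ _, hdisj_e⟩
  refine ⟨M ／ range c ↾ range e, ⟨range c, (M ／ range c).E \ range e, ?_⟩, he_inj, rfl,
    fun S => ?_⟩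
  · rw [contractSet_eq_contract, sdiff_sdiff_cancel_left hground]
  rw [restrict_indep_iff, and_iff_left (image_subset_range _ _),
    hM.contract_indep_iff hC (by simp [hE]) (hdisj_e.mono_left (image_subset_range _ _)),
    ← range_comp]
  refine ⟨fun h => ?_, fun h => .image_of_comp _ _ ?_⟩
  · rw [← π.linearIndepOn_iff_of_injOn hπ.injOn, ← hπe]
    exact h.comp_of_image he_inj.injOn
  · change LinearIndepOn F (Q.mkQ ∘ A ∘ e) S
    rwa [hπe, π.linearIndepOn_iff_of_injOn hπ.injOn]

end Matroid

theorem add_mul_two_mul_add_one_le {q t m : ℕ} (hq : 1 ≤ q) (ht : 3 ≤ t) (hm : m ≤ q ^ t) :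
    t + m * (2 * t + 1) ≤ (q * t) ^ 2 ^ t := by
  have hqt : 1 ≤ q ^ t := Nat.one_le_pow t q hq
  calc t + m * (2 * t + 1) ≤ q ^ t * (3 * t + 1) := by nlinarith
    _ ≤ q ^ t * t ^ t := by
      refine Nat.mul_le_mul_left _ (le_trans ?_ (Nat.pow_le_pow_right (by omega) ht))
      have h9 : 9 ≤ t * t := Nat.mul_le_mul ht ht
      calc 3 * t + 1 ≤ t * t * t := by nlinarith
        _ = t ^ 3 := by ring
    _ = (q * t) ^ t := (mul_pow q t t).symm
    _ ≤ (q * t) ^ 2 ^ t := Nat.pow_le_pow_right (by positivity) Nat.lt_two_pow_self.le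

theorem Projectivization.card_le (K V : Type*) [DivisionRing K] [AddCommGroup V] [Module K V]
    [Finite V] : Nat.card (Projectivization K V) ≤ Nat.card V :=
  (Nat.card_le_card_of_surjective (fun v : {v : V // v ≠ 0} => Projectivization.mk K v.1 v.2)
    fun p => ⟨⟨p.rep, p.rep_nonzero⟩, p.mk_rep⟩).trans (Finite.card_subtype_le _)

theorem Projectivization.rep_injective (K V : Type*) [DivisionRing K] [AddCommGroup V]
    [Module K V] : Function.Injective (Projectivization.rep : Projectivization K V → V) := by
  intro p q h
  rw [← p.mk_rep, ← q.mk_rep]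
  simp only [h]

/-- If `A` is a matrix over `F_q` with at least `(qt)^{2^t}` rows such that every standard
basis vector and every vector of support size exactly three is a column of `A`, then the
column matroid `M[A]` has a `PG(t-1, q)`-minor. -/
theorem pg_minor {E F : Type*} [Field F] [Fintype F]
    (t : ℕ) (ht : 3 ≤ t) {n : ℕ}
    (hn : (Fintype.card F * t) ^ 2 ^ t ≤ n)
    (A : E → Fin n → F)
    (hbasis : ∀ i : Fin n, ∃ e : E, A e = Pi.single i (1 : F))
    (hsupp3 : ∀ v : Fin n → F, {i | v i ≠ 0}.ncard = 3 → ∃ e : E, A e = v)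
    (M : Matroid E) (hE : M.E = Set.univ) (hM : M.RepBy A) :
    ∃ N : Matroid E, N.IsMinorOf M ∧
      ∃ φ : Projectivization F (Fin t → F) → E,
        Function.Injective φ ∧ Set.range φ = N.E ∧
        ∀ S : Set (Projectivization F (Fin t → F)),
          (N.Indep (φ '' S) ↔ LinearIndependent F (fun s : S => s.1.rep)) := by
  classical
  have : NeZero t := ⟨by omega⟩
  have := Fintype.ofFinite (Projectivization F (Fin t → F))
  have hcard : Fintype.card (Projectivization F (Fin t → F)) ≤ Fintype.card F ^ t := by
    simpa [Nat.card_eq_fintype_card] using Projectivization.card_le F (Fin t → F)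
  obtain ⟨Z, b, w, hli, hZ, hw, hspan⟩ :=
    exists_gadgets ((add_mul_two_mul_add_one_le Fintype.card_pos ht hcard).trans hn)
      (fun p : Projectivization F (Fin t → F) => p.rep)
  have hcol : ∀ v, IsSingleOrSupportThree v → ∃ e, A e = v := by
    rintro v (⟨i, rfl⟩ | hv)
    exacts [hbasis i, hsupp3 v hv]
  choose c hc using fun x => hcol _ (hZ x)
  choose e he using fun p => hcol _ (Or.inr (hw p))
  have hAc : A ∘ c = Z := funext hc
  obtain ⟨N, hN, he_inj, hrange, hindep⟩ := hM.exists_isMinorOf hE (hAc ▸ hli)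
    (Projectivization.rep_injective F _) (fun p => p.rep_nonzero)
    (fun p => by rw [he, hAc]; exact hspan p)
  exact ⟨N, hN, e, he_inj, hrange, hindep⟩
end

section
/- Let F be a field, A an n × m matrix over F with column set E, and X ⊆ E. Let a = rk(A_X) and let B be row equivalent to A such that the submatrix B_X has the block form [[I_a, *],[0, 0]] with the identity I_a in the first a rows. Let A_{/X} be the matrix obtained from B by deleting those a rows and all columns in X. Then M[A]/X = M[A_{/X}]: a set S ⊆ E − X is independent in the contraction M[A]/X if and only if the corresponding columns of A_{/X} are linearly independent. -/
open Finset

/-- One elementary row operation: swap two rows, scale a row by a nonzero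
scalar, or add a scalar multiple of one row to another row. -/
def ElemRowStep {F : Type*} [Field F] {n : ℕ} {E : Type*}
    (A B : Matrix (Fin n) E F) : Prop :=
  (∃ i j : Fin n, B = A.submatrix (Equiv.swap i j) id) ∨
  (∃ (i : Fin n) (c : F), c ≠ 0 ∧ B = A.updateRow i (c • A i)) ∨
  (∃ (i j : Fin n) (c : F), i ≠ j ∧ B = A.updateRow i (A i + c • A j))

/-- `B` is obtained from `A` by a finite sequence of elementary row operations. -/
def RowEquiv {F : Type*} [Field F] {n : ℕ} {E : Type*}
    (A B : Matrix (Fin n) E F) : Prop :=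
  Relation.ReflTransGen ElemRowStep A B

/-
Row operations multiply `A` on the left by an invertible matrix `M`, and `M` maps the span of
any set of columns of `A` isomorphically onto the span of the corresponding columns of `B`.
A set `S` is independent in `M[A] / X` iff the columns of `S` are independent and their span
meets the span of the columns of `X` trivially, i.e. iff these columns stay independent modulo
the span of `A_X`. In `B` the columns of `X` vanish on the last `n - a` rows and contain the
first `a` unit vectors, so they span exactly the vectors vanishing on those rows: taking the
quotient by the span of `B_X` amounts to deleting the first `a` rows.
-/

open Submodule

open Matrix in
theorem ElemRowStep.exists_isUnit_mul {F : Type*} [Field F] {n : ℕ} {E : Type*}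
    {A B : Matrix (Fin n) E F} (h : ElemRowStep A B) :
    ∃ M : Matrix (Fin n) (Fin n) F, IsUnit M ∧ B = M * A := by
  have one_row_vecMul (i : Fin n) : (1 : Matrix (Fin n) (Fin n) F) i ᵥ* A = A i := by
    ext x; simp [vecMul, dotProduct, one_apply]
  rcases h with ⟨i, j, rfl⟩ | ⟨i, c, hc, rfl⟩ | ⟨i, j, c, hij, rfl⟩
  · refine ⟨(1 : Matrix (Fin n) (Fin n) F).submatrix (Equiv.swap i j) id, ?_, ?_⟩
    · simp [isUnit_iff_isUnit_det, det_permute, apply_ite]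
    · simpa using (one_submatrix_mul (Equiv.swap i j) (Equiv.refl _) A).symm
  · refine ⟨(1 : Matrix (Fin n) (Fin n) F).updateRow i (c • (1 : Matrix (Fin n) (Fin n) F) i),
      ?_, ?_⟩
    · simp [isUnit_iff_isUnit_det, det_updateRow_smul, updateRow_eq_self, hc]
    · rw [updateRow_mul, Matrix.one_mul, smul_vecMul, one_row_vecMul]
  · refine ⟨transvection i j c, ?_, ?_⟩
    · simp [isUnit_iff_isUnit_det, hij]
    · rw [← updateRow_eq_transvection, updateRow_mul, Matrix.one_mul, add_vecMul, smul_vecMul,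
        one_row_vecMul, one_row_vecMul]

theorem RowEquiv.exists_isUnit_mul {F : Type*} [Field F] {n : ℕ} {E : Type*}
    {A B : Matrix (Fin n) E F} (h : RowEquiv A B) :
    ∃ M : Matrix (Fin n) (Fin n) F, IsUnit M ∧ B = M * A := by
  induction h with
  | refl => exact ⟨1, isUnit_one, (Matrix.one_mul A).symm⟩
  | tail _ hstep ih =>
    obtain ⟨M, hM, rfl⟩ := ih
    obtain ⟨M', hM', rfl⟩ := hstep.exists_isUnit_mul
    exact ⟨M' * M, hM'.mul hM, (Matrix.mul_assoc _ _ _).symm⟩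

section LinearIndependence

variable {K V W ι : Type*} [DivisionRing K] [AddCommGroup V] [Module K V] [AddCommGroup W]
  [Module K W] {v : ι → V}

theorem linearIndepOn_comp_iff_disjoint_ker (f : V →ₗ[K] W) {s : Set ι} :
    LinearIndepOn K (f ∘ v) s ↔
      LinearIndepOn K v s ∧ Disjoint (span K (v '' s)) (LinearMap.ker f) := by
  refine ⟨fun h => ⟨h.of_comp f, ?_⟩, fun ⟨hv, hdisj⟩ =>
    (f.linearIndepOn_iff_of_injOn (LinearMap.injOn_of_disjoint_ker le_rfl hdisj)).2 hv⟩
  rw [LinearMap.disjoint_ker]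
  intro y hy hfy
  obtain ⟨l, hl, rfl⟩ := (Finsupp.mem_span_image_iff_linearCombination K).1 hy
  have hl0 : l = 0 := linearIndepOn_iff.1 h l hl <| by
    rwa [Finsupp.linearCombination_linear_comp, LinearMap.comp_apply]
  simp [hl0]

theorem maximal_linearIndepOn_iff_subset_span {J X : Finset ι} (hJX : J ⊆ X)
    (hJ : LinearIndepOn K v J) :
    (∀ J' : Finset ι, J ⊆ J' → J' ⊆ X → LinearIndepOn K v J' → J' = J) ↔
      v '' X ⊆ span K (v '' J) := by
  classical
  constructor
  · rintro hmax _ ⟨x, hx, rfl⟩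
    by_contra hxJ
    have hx' : x ∉ J := fun h => hxJ (subset_span ⟨x, h, rfl⟩)
    have hins : LinearIndepOn K v (insert x J : Finset ι) := by
      rw [Finset.coe_insert, linearIndepOn_insert (by simpa using hx')]
      exact ⟨hJ, hxJ⟩
    exact hx' (hmax _ (Finset.subset_insert x J) (Finset.insert_subset hx hJX) hins ▸
      Finset.mem_insert_self x J)
  · intro hspan J' hJJ' hJ'X hJ'
    by_contra hne
    obtain ⟨x, hxJ', hxJ⟩ := Finset.exists_of_ssubset (hJJ'.ssubset_of_ne (Ne.symm hne))
    have hins : LinearIndepOn K v (insert x (J : Set ι)) :=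
      hJ'.mono (Set.insert_subset hxJ' (Finset.coe_subset.2 hJJ'))
    rw [linearIndepOn_insert (by simpa using hxJ)] at hins
    exact hins.2 (hspan ⟨x, hJ'X hxJ', rfl⟩)

theorem exists_maximal_linearIndepOn_union_iff [DecidableEq ι] (v : ι → V) {X S : Finset ι}
    (hSX : Disjoint S X) :
    (∃ J : Finset ι, J ⊆ X ∧ LinearIndepOn K v J ∧
        (∀ J' : Finset ι, J ⊆ J' → J' ⊆ X → LinearIndepOn K v J' → J' = J) ∧
        LinearIndepOn K v (S ∪ J : Finset ι)) ↔
      LinearIndepOn K v S ∧ Disjoint (span K (v '' S)) (span K (v '' X)) := by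
  have union_iff {J : Finset ι} (hJX : J ⊆ X) (hJ : LinearIndepOn K v J)
      (hspan : v '' X ⊆ span K (v '' J)) :
      LinearIndepOn K v (S ∪ J : Finset ι) ↔
        LinearIndepOn K v S ∧ Disjoint (span K (v '' S)) (span K (v '' X)) := by
    have hXJ : span K (v '' X) = span K (v '' J) :=
      le_antisymm (span_le.2 hspan) (span_mono (Set.image_mono (Finset.coe_subset.2 hJX)))
    rw [Finset.coe_union, linearIndepOn_union_iff (Finset.disjoint_coe.2 (hSX.mono_right hJX)),
      hXJ]
    tauto
  constructor
  · rintro ⟨J, hJX, hJ, hmax, hSJ⟩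
    have hspan := (maximal_linearIndepOn_iff_subset_span hJX hJ).1 hmax
    exact (union_iff hJX hJ hspan).1 hSJ
  · intro h
    obtain ⟨b, hbX, -, hspan, hb⟩ :=
      exists_linearIndepOn_extension (linearIndepOn_empty K v) (Set.empty_subset (X : Set ι))
    obtain ⟨J, rfl⟩ := (X.finite_toSet.subset hbX).exists_finset_coe
    have hJX := Finset.coe_subset.1 hbX
    exact ⟨J, hJX, hb, (maximal_linearIndepOn_iff_subset_span hJX hb).2 hspan,
      (union_iff hJX hb hspan).2 h⟩

end LinearIndependence

theorem span_image_transpose_mul {R ρ ι : Type*} [CommSemiring R] [Fintype ρ]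
    (M : Matrix ρ ρ R) (A : Matrix ρ ι R) (X : Set ι) :
    span R ((M * A).transpose '' X) = (span R (A.transpose '' X)).map M.mulVecLin := by
  have hcol (x : ι) : (M * A).transpose x = M.mulVecLin (A.transpose x) := by
    ext i
    simp [Matrix.mul_apply, Matrix.mulVec, dotProduct]
  rw [Submodule.map_span]
  congr 1
  ext v
  constructor
  · rintro ⟨x, hx, rfl⟩
    exact ⟨_, ⟨x, hx, rfl⟩, (hcol x).symm⟩
  · rintro ⟨_, ⟨x, hx, rfl⟩, rfl⟩
    exact ⟨x, hx, hcol x⟩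

theorem span_image_transpose_eq_ker_funLeft {R ρ ι : Type*} [Semiring R] [Fintype ρ]
    [DecidableEq ρ]
    (B : Matrix ρ ι R) (X : Set ι) (p : ρ → Prop)
    (hzero : ∀ r, p r → ∀ x ∈ X, B r x = 0)
    (hsingle : ∀ r, ¬ p r → ∃ x ∈ X, B.transpose x = Pi.single r 1) :
    span R (B.transpose '' X) =
      LinearMap.ker (LinearMap.funLeft R R (Subtype.val : {r // p r} → ρ)) := by
  refine le_antisymm (span_le.2 ?_) fun t ht => ?_
  · rintro _ ⟨x, hx, rfl⟩
    ext ⟨r, hr⟩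
    exact hzero r hr x hx
  · rw [pi_eq_sum_univ' t]
    refine sum_mem fun r _ => ?_
    by_cases hr : p r
    · simp [show t r = 0 from congrFun ht ⟨r, hr⟩]
    · obtain ⟨x, hx, hxr⟩ := hsingle r hr
      exact smul_mem _ _ (subset_span ⟨x, hx, hxr⟩)

theorem exists_transpose_eq_single_of_identity_block {R ι : Type*} [Semiring R] {n a : ℕ}
    (B : Matrix (Fin n) ι R) (X : Set ι) (han : a ≤ n)
    (hzero : ∀ i : Fin n, a ≤ (i : ℕ) → ∀ x ∈ X, B i x = 0) (e : Fin a → ι)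
    (heX : ∀ j, e j ∈ X)
    (hid : ∀ i j : Fin a, B ⟨i, lt_of_lt_of_le i.2 han⟩ (e j) = if i = j then 1 else 0)
    (r : Fin n) (hr : ¬ a ≤ (r : ℕ)) : ∃ x ∈ X, B.transpose x = Pi.single r 1 := by
  refine ⟨e ⟨r, by omega⟩, heX _, funext fun i => ?_⟩
  by_cases hi : a ≤ (i : ℕ)
  · rw [Matrix.transpose_apply, hzero i hi _ (heX _), Pi.single_apply, if_neg]
    rintro rfl
    exact hr hi
  · simpa [Pi.single_apply, Fin.ext_iff] using hid ⟨i, by omega⟩ ⟨r, by omega⟩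

theorem contract_matrix_representation_general {F : Type*} [Field F] {n m : ℕ}
    (A B : Matrix (Fin n) (Fin m) F) (hAB : RowEquiv A B)
    (X : Finset (Fin m)) (a : ℕ)
    (han : a ≤ n)
    (hzero : ∀ i : Fin n, a ≤ (i : ℕ) → ∀ x ∈ X, B i x = 0)
    (hident : ∃ e : Fin a → X, Function.Injective e ∧
      ∀ i j : Fin a, B ⟨(i : ℕ), lt_of_lt_of_le i.2 han⟩ (e j) = if i = j then 1 else 0)
    (S : Finset (Fin m)) (hSX : Disjoint S X) :
    (∃ J : Finset (Fin m), J ⊆ X ∧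
        LinearIndependent F (fun j : J => A.transpose j.1) ∧
        (∀ J' : Finset (Fin m), J ⊆ J' → J' ⊆ X →
          LinearIndependent F (fun j : J' => A.transpose j.1) → J' = J) ∧
        LinearIndependent F (fun j : (S ∪ J : Finset (Fin m)) => A.transpose j.1)) ↔
      LinearIndependent F
        (fun s : S => fun i : {i : Fin n // a ≤ (i : ℕ)} => B i.1 s.1) := by
  obtain ⟨e, -, hid⟩ := hident
  obtain ⟨M, hM, rfl⟩ := hAB.exists_isUnit_mul
  set bottomRows := LinearMap.funLeft F F (Subtype.val : {i : Fin n // a ≤ (i : ℕ)} → Fin n)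
  have hker : LinearMap.ker (bottomRows ∘ₗ M.mulVecLin) = span F (A.transpose '' X) := by
    rw [LinearMap.ker_comp, ← span_image_transpose_eq_ker_funLeft (M * A) (X : Set (Fin m)) _
      hzero (exists_transpose_eq_single_of_identity_block (M * A) (X : Set (Fin m)) han hzero
        (fun j => (e j : Fin m)) (fun j => (e j).2) hid), span_image_transpose_mul,
      Submodule.comap_map_eq_of_injective (Matrix.mulVec_injective_iff_isUnit.2 hM)]
  refine (exists_maximal_linearIndepOn_union_iff A.transpose hSX).trans ?_
  rw [← hker]
  -- the right-hand side unfolds to `LinearIndepOn F ((bottomRows ∘ₗ M.mulVecLin) ∘ Aᵀ) S`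
  exact (linearIndepOn_comp_iff_disjoint_ker _).symm

/-- Let `B` be row equivalent to `A` such that the submatrix `B_X` has the block form
`[[I_a, *], [0, 0]]` where `a = rk(A_X)` (the identity occupying `a` distinct columns of
`X` in the first `a` rows, and all rows beyond the first `a` vanishing on `X`).
Then, for any `S ⊆ E - X`, the set `S` is independent in the contraction `M[A]/X`
(i.e. `S ∪ J` has linearly independent columns in `A` for some maximal linearly
independent `J ⊆ X`) if and only if the corresponding columns of the matrix `A_{/X}`,
obtained from `B` by deleting the first `a` rows and the columns in `X`, are linearly
independent. -/
theorem contract_matrix_representation {F : Type*} [Field F] {n m : ℕ}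
    (A B : Matrix (Fin n) (Fin m) F) (hAB : RowEquiv A B)
    (X : Finset (Fin m)) (a : ℕ)
    (ha : a = (A.submatrix id (fun x : X => (x : Fin m))).rank)
    (han : a ≤ n)
    (hzero : ∀ i : Fin n, a ≤ (i : ℕ) → ∀ x ∈ X, B i x = 0)
    (hident : ∃ e : Fin a → X, Function.Injective e ∧
      ∀ i j : Fin a, B ⟨(i : ℕ), lt_of_lt_of_le i.2 han⟩ (e j) = if i = j then 1 else 0)
    (S : Finset (Fin m)) (hSX : Disjoint S X) :
    (∃ J : Finset (Fin m), J ⊆ X ∧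
        LinearIndependent F (fun j : J => A.transpose j.1) ∧
        (∀ J' : Finset (Fin m), J ⊆ J' → J' ⊆ X →
          LinearIndependent F (fun j : J' => A.transpose j.1) → J' = J) ∧
        LinearIndependent F (fun j : (S ∪ J : Finset (Fin m)) => A.transpose j.1)) ↔
      LinearIndependent F
        (fun s : S => fun i : {i : Fin n // a ≤ (i : ℕ)} => B i.1 s.1) :=
  contract_matrix_representation_general A B hAB X a han hzero hident S hSX
end

section
/- Let μ ≈ solve f(μ) = k with f(x) = x(e^x−1)/(e^x−1−x), and define β_k = (e^{−μ} μ^2/2) / (Σ_{j≥2} e^{−μ} μ^j / j!) = (μ^2/2)/(e^μ − 1 − μ). Then μ_k > 2 for every integer k ≥ 3, the function x ↦ x^2/(2(e^x − 1 − x)) is strictly decreasing for x > 2, and consequently β_k ≤ β_3 < 0.45 for every k ≥ 3. -/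
/-!
Write `f = truncMean` and `β = truncBeta`. Since `exp x - 1 = (exp x - 1 - x) + x`, one has
`f x = x + 2 β x`. The derivative of `f` has the sign of `(exp x - 1)² - x² exp x`, which is
positive because `sinh (x/2) > x/2`; so `f` is strictly increasing on `(0, ∞)`, and `f 2 < 3`
(as `exp 2 > 7`) forces `μ_k > 2`. The derivative of `β` has the sign of
`(2 - x)(exp x - 1) - 2x`, which is negative for `x ≥ 2`. Finally `β_3 = (3 - μ_3)/2`, and
`f 2.1 < 3` (as `exp 2.1 > 8`) gives `μ_3 > 2.1`, hence `β_3 < 0.45`.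
-/

open Real Set

/-- The mean `E[X | X ≥ 2]` for `X ~ Poisson(x)`; `truncBeta x` is `P(X = 2 | X ≥ 2)`. -/
noncomputable def truncMean (x : ℝ) : ℝ := x * (exp x - 1) / (exp x - 1 - x)

noncomputable def truncBeta (x : ℝ) : ℝ := x ^ 2 / (2 * (exp x - 1 - x))

lemma exp_sub_one_sub_pos {x : ℝ} (hx : x ≠ 0) : 0 < exp x - 1 - x := by
  linarith [add_one_lt_exp hx]

lemma mul_exp_half_lt_exp_sub_one {x : ℝ} (hx : 0 < x) : x * exp (x / 2) < exp x - 1 := by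
  have hsinh : x / 2 < sinh (x / 2) := self_lt_sinh_iff.2 (by positivity)
  have hu : exp (x / 2) * exp (-(x / 2)) = 1 := by rw [← exp_add]; simp
  have hsq : exp (x / 2) * exp (x / 2) = exp x := by rw [← exp_add]; ring_nf
  rw [sinh_eq] at hsinh
  nlinarith [exp_pos (x / 2)]

lemma sq_mul_exp_lt_sq_exp_sub_one {x : ℝ} (hx : 0 < x) : x ^ 2 * exp x < (exp x - 1) ^ 2 := by
  have h := mul_exp_half_lt_exp_sub_one hx
  have hsq : exp (x / 2) ^ 2 = exp x := by rw [← exp_nat_mul]; ring_nf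
  calc x ^ 2 * exp x = (x * exp (x / 2)) ^ 2 := by rw [mul_pow, hsq]
    _ < (exp x - 1) ^ 2 := pow_lt_pow_left₀ h (by positivity) two_ne_zero

lemma hasDerivAt_truncMean {x : ℝ} (hx : x ≠ 0) :
    HasDerivAt truncMean (((exp x - 1) ^ 2 - x ^ 2 * exp x) / (exp x - 1 - x) ^ 2) x := by
  have hnum : HasDerivAt (fun y => y * (exp y - 1)) (1 * (exp x - 1) + x * exp x) x :=
    (hasDerivAt_id x).mul ((hasDerivAt_exp x).sub_const 1)
  have hden : HasDerivAt (fun y => exp y - 1 - y) (exp x - 1) x :=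
    ((hasDerivAt_exp x).sub_const 1).sub (hasDerivAt_id x)
  exact (hnum.div hden (exp_sub_one_sub_pos hx).ne').congr_deriv (by ring)

lemma truncMean_strictMonoOn : StrictMonoOn truncMean (Ioi 0) := by
  refine strictMonoOn_of_deriv_pos (convex_Ioi 0)
    (fun x hx => (hasDerivAt_truncMean (ne_of_gt hx)).continuousAt.continuousWithinAt) ?_
  intro x hx
  rw [interior_Ioi] at hx
  rw [(hasDerivAt_truncMean (ne_of_gt hx)).deriv]
  exact div_pos (sub_pos.2 (sq_mul_exp_lt_sq_exp_sub_one hx))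
    (pow_pos (exp_sub_one_sub_pos (ne_of_gt hx)) 2)

lemma hasDerivAt_truncBeta {x : ℝ} (hx : x ≠ 0) :
    HasDerivAt truncBeta (x * ((2 - x) * (exp x - 1) - 2 * x) / (2 * (exp x - 1 - x) ^ 2)) x := by
  have hD := exp_sub_one_sub_pos hx
  have hnum : HasDerivAt (fun y => y ^ 2) (2 * x) x := by simpa using hasDerivAt_pow 2 x
  have hden : HasDerivAt (fun y => 2 * (exp y - 1 - y)) (2 * (exp x - 1)) x :=
    (((hasDerivAt_exp x).sub_const 1).sub (hasDerivAt_id x)).const_mul 2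
  exact (hnum.div hden (by positivity)).congr_deriv (by field_simp; ring)

lemma truncBeta_strictAntiOn : StrictAntiOn truncBeta (Ioi 2) := by
  refine strictAntiOn_of_deriv_neg (convex_Ioi 2)
    (fun x hx => (hasDerivAt_truncBeta (ne_of_gt (two_pos.trans hx))).continuousAt
      |>.continuousWithinAt) ?_
  intro x hx
  rw [interior_Ioi, mem_Ioi] at hx
  have hx0 : x ≠ 0 := by linarith
  rw [(hasDerivAt_truncBeta hx0).deriv]
  have hnum : (2 - x) * (exp x - 1) - 2 * x < 0 := by
    nlinarith [add_one_lt_exp hx0]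
  exact div_neg_of_neg_of_pos (mul_neg_of_pos_of_neg (by linarith) hnum)
    (by positivity [exp_sub_one_sub_pos hx0])

lemma truncBeta_eq {x : ℝ} (hx : x ≠ 0) : truncBeta x = (truncMean x - x) / 2 := by
  have hD := (exp_sub_one_sub_pos hx).ne'
  unfold truncBeta truncMean
  field_simp
  ring

lemma exp_two_gt_d1 : 7.3 < exp 2 := by
  have h : exp 2 = exp 1 ^ 2 := by rw [← exp_nat_mul]; norm_num
  nlinarith [exp_one_gt_d9]

lemma exp_two_point_one_gt_eight : 8 < exp 2.1 := by
  have h : exp 2.1 = exp 2 * exp 0.1 := by rw [← exp_add]; norm_num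
  have := add_one_lt_exp (x := 0.1) (by norm_num)
  nlinarith [exp_two_gt_d1, exp_pos 0.1]

lemma truncMean_two_lt_three : truncMean 2 < 3 := by
  have hD := exp_sub_one_sub_pos (x := 2) two_ne_zero
  rw [truncMean, div_lt_iff₀ hD]
  linarith [exp_two_gt_d1]

lemma truncMean_two_point_one_lt_three : truncMean 2.1 < 3 := by
  have hD := exp_sub_one_sub_pos (x := 2.1) (by norm_num)
  rw [truncMean, div_lt_iff₀ hD]
  linarith [exp_two_point_one_gt_eight]

lemma lt_of_truncMean_lt {a μ : ℝ} (ha : 0 < a) (hμ : 0 < μ) (h : truncMean a < truncMean μ) :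
    a < μ :=
  (truncMean_strictMonoOn.lt_iff_lt ha hμ).1 h

theorem beta_k_bounds :
    (∀ k : ℕ, 3 ≤ k → ∀ μ : ℝ, 0 < μ →
        μ * (Real.exp μ - 1) / (Real.exp μ - 1 - μ) = k → 2 < μ) ∧
    StrictAntiOn (fun x : ℝ => x ^ 2 / (2 * (Real.exp x - 1 - x))) (Set.Ioi (2 : ℝ)) ∧
    (∀ k : ℕ, 3 ≤ k → ∀ μk μ3 : ℝ,
        0 < μk → μk * (Real.exp μk - 1) / (Real.exp μk - 1 - μk) = k →
        0 < μ3 → μ3 * (Real.exp μ3 - 1) / (Real.exp μ3 - 1 - μ3) = 3 →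
        μk ^ 2 / (2 * (Real.exp μk - 1 - μk)) ≤ μ3 ^ 2 / (2 * (Real.exp μ3 - 1 - μ3)) ∧
        μ3 ^ 2 / (2 * (Real.exp μ3 - 1 - μ3)) < 0.45) := by
  have two_lt {k : ℕ} (hk : 3 ≤ k) {μ : ℝ} (hμ : 0 < μ) (h : truncMean μ = k) : 2 < μ :=
    lt_of_truncMean_lt two_pos hμ <| truncMean_two_lt_three.trans_le <| h ▸ by exact_mod_cast hk
  refine ⟨fun k hk μ hμ h => two_lt hk hμ h, truncBeta_strictAntiOn, ?_⟩
  intro k hk μk μ3 hμk (hμk_eq : truncMean μk = k) hμ3 (hμ3_eq : truncMean μ3 = 3)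
  have hk3 : (3 : ℝ) ≤ k := by exact_mod_cast hk
  have hμ3_le : μ3 ≤ μk :=
    (truncMean_strictMonoOn.le_iff_le hμ3 hμk).1 (by rw [hμk_eq, hμ3_eq]; exact hk3)
  have hμ3_gt : 2.1 < μ3 :=
    lt_of_truncMean_lt (by norm_num) hμ3 (hμ3_eq ▸ truncMean_two_point_one_lt_three)
  refine ⟨truncBeta_strictAntiOn.antitoneOn (two_lt le_rfl hμ3 (by exact_mod_cast hμ3_eq))
    (two_lt hk hμk hμk_eq) hμ3_le, ?_⟩
  change truncBeta μ3 < 0.45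
  rw [truncBeta_eq hμ3.ne', hμ3_eq]
  linarith
end
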